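/- For every r₀ ∈ (0,1) there exist constants C₁, C₂, C₃ > 0 such that the following holds for every p: for all m ≥ 2, all r ∈ [r₀, 1 − r₀], all c ∈ (0, r₀/2), all ε ∈ (0, C₁), and all (g¹, …, g^m) ∈ (ℝ^p)^m satisfying ‖gⁱ‖ ∈ (√p(1 − ε), √p(1 + ε)) for every i and (√p g¹/‖g¹‖, …, √p g^m/‖g^m‖) ∈ 𝒮(m, c, r), setting b = (1/m) Σ_{i=1}^m gⁱ and b̃ = √p · b/‖b‖, one has |(gⁱ − b)ᵀ b̃| ≤ (C₂·c + C₃·ε)·p for every i ∈ {1, …, m}. -/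

import Mathlib

open scoped BigOperators

noncomputable section

namespace TAPReg

/-- Squared Euclidean norm of a vector in `ℝ^k`. -/
def normSq {k : ℕ} (x : Fin k → ℝ) : ℝ := ∑ i, x i ^ 2

/-- Euclidean inner product on `ℝ^k`. -/
def dotp {k : ℕ} (x y : Fin k → ℝ) : ℝ := ∑ i, x i * y i

/-- The overlap-constrained set `𝒮(m, c, r)` of `m`-tuples of points on the sphere
`S^{p-1}(√p)` whose pairwise overlaps are within `c` of `r`. -/
def SSet (p m : ℕ) (c r : ℝ) : Set (Fin m → Fin p → ℝ) :=
  {B | (∀ i, normSq (B i) = p) ∧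
       ∀ i j, i ≠ j → |dotp (B i) (B j) / p - r| ≤ c}

/-- The sample mean `b = (1/m) Σᵢ gⁱ` of an `m`-tuple of vectors. -/
def avg {p m : ℕ} (B : Fin m → Fin p → ℝ) : Fin p → ℝ :=
  fun j => (∑ i, B i j) / m

lemma normSq_nonneg' {k : ℕ} (x : Fin k → ℝ) : 0 ≤ normSq x :=
  Finset.sum_nonneg fun _ _ => sq_nonneg _

lemma normSq_eq_dotp {k : ℕ} (x : Fin k → ℝ) : normSq x = dotp x x := by
  simp [normSq, dotp, sq]

lemma dotp_comm {k : ℕ} (x y : Fin k → ℝ) : dotp x y = dotp y x := by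
  simp [dotp, mul_comm]

lemma dotp_smul_left {k : ℕ} (a : ℝ) (x y : Fin k → ℝ) :
    dotp (a • x) y = a * dotp x y := by
  simp [dotp, Finset.mul_sum, mul_assoc]

lemma dotp_smul_right {k : ℕ} (a : ℝ) (x y : Fin k → ℝ) :
    dotp x (a • y) = a * dotp x y := by
  simp [dotp, Finset.mul_sum, mul_left_comm]

lemma dotp_sub_left {k : ℕ} (x y z : Fin k → ℝ) :
    dotp (fun j => x j - y j) z = dotp x z - dotp y z := by
  simp [dotp, sub_mul, Finset.sum_sub_distrib]

lemma dotp_avg_right {p m : ℕ} (x : Fin p → ℝ) (g : Fin m → Fin p → ℝ) :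
    dotp x (avg g) = (∑ j, dotp x (g j)) / m := by
  unfold dotp avg
  have h : ∀ i : Fin p, x i * ((∑ j, g j i) / (m:ℝ)) = (∑ j, x i * g j i) / m := by
    intro i
    rw [← mul_div_assoc, Finset.mul_sum]
  simp_rw [h]
  rw [← Finset.sum_div, Finset.sum_comm]

lemma arith_upper {r c ε p : ℝ} (hp : 0 < p) (hc : 0 < c) (hε : 0 < ε)
    (hε1 : ε ≤ 1) (hrc : r + c ≤ 1) (hr0 : 0 ≤ r) :
    (r + c) * (p * (1+ε)^2) - r * p ≤ 3 * (c + ε) * p := by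
  nlinarith [mul_nonneg (mul_nonneg hp.le hε.le) (by linarith : (0:ℝ) ≤ 1 - r - c),
    mul_nonneg (mul_nonneg hp.le hε.le) (by linarith : (0:ℝ) ≤ 1 - ε),
    mul_nonneg (mul_nonneg (mul_nonneg hp.le hε.le) hε.le)
      (by linarith : (0:ℝ) ≤ 1 - r - c),
    mul_pos hp hc]

lemma arith_lower {r c ε p : ℝ} (hp : 0 < p) (hc : 0 < c) (hε : 0 < ε)
    (hrc0 : 0 ≤ r - c) (hrc1 : r - c ≤ 1) :
    r * p - (r - c) * (p * (1-ε)^2) ≤ 3 * (c + ε) * p := by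
  nlinarith [mul_nonneg hp.le hε.le,
    mul_nonneg (mul_nonneg hp.le hε.le) (by linarith : (0:ℝ) ≤ 1 - r + c),
    mul_nonneg (mul_nonneg (mul_nonneg hp.le hε.le) hε.le) hrc0,
    mul_pos hp hc]

/-- Abstract row-sum bound. -/
lemma row_bound {m : ℕ} (s : Fin m → Fin m → ℝ) (a d M : ℝ)
    (h : ∀ j k, |s j k - (a + if k = j then d else 0)| ≤ M) (j : Fin m) :
    |(∑ k, s j k) - ((m:ℝ) * a + d)| ≤ (m:ℝ) * M := by
  have e : (∑ k : Fin m, (a + if k = j then d else 0)) = (m:ℝ) * a + d := by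
    rw [Finset.sum_add_distrib, Finset.sum_const, Finset.sum_ite_eq' Finset.univ j]
    simp [Finset.card_univ, nsmul_eq_mul]
  calc |(∑ k, s j k) - ((m:ℝ) * a + d)|
      = |∑ k, (s j k - (a + if k = j then d else 0))| := by
        rw [Finset.sum_sub_distrib, e]
    _ ≤ ∑ k, |s j k - (a + if k = j then d else 0)| :=
        Finset.abs_sum_le_sum_abs _ _
    _ ≤ ∑ _k : Fin m, M := Finset.sum_le_sum (fun k _ => h j k)
    _ = (m:ℝ) * M := by simp [Finset.sum_const, Finset.card_univ, nsmul_eq_mul]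

set_option maxHeartbeats 1600000 in
/-- **Lemma 3.8.** For every `r₀ ∈ (0,1)` there exist `C₁, C₂, C₃ > 0` such that for all
`p`, all `m ≥ 2`, all `r ∈ [r₀, 1 − r₀]`, all `c ∈ (0, r₀/2)`, all `ε ∈ (0, C₁)` and all
`(g¹, …, g^m)` with `‖gⁱ‖ ∈ (√p(1−ε), √p(1+ε))` for every `i` and with the normalized
tuple `(√p gⁱ/‖gⁱ‖)ᵢ ∈ 𝒮(m, c, r)`, setting `b = (1/m) Σᵢ gⁱ` and `b̃ = √p · b/‖b‖`,
one has `|(gⁱ − b)ᵀ b̃| ≤ (C₂ c + C₃ ε) p` for every `i`. -/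
theorem centered_gaussian_orthogonality (r₀ : ℝ) (hr₀ : r₀ ∈ Set.Ioo (0 : ℝ) 1) :
    ∃ C₁ : ℝ, 0 < C₁ ∧ ∃ C₂ : ℝ, 0 < C₂ ∧ ∃ C₃ : ℝ, 0 < C₃ ∧
      ∀ (p m : ℕ), 2 ≤ m →
      ∀ r ∈ Set.Icc r₀ (1 - r₀), ∀ c ∈ Set.Ioo (0 : ℝ) (r₀ / 2),
      ∀ ε ∈ Set.Ioo (0 : ℝ) C₁,
      ∀ g : Fin m → Fin p → ℝ,
        (∀ i, Real.sqrt (normSq (g i)) ∈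
          Set.Ioo (Real.sqrt p * (1 - ε)) (Real.sqrt p * (1 + ε))) →
        (fun i => (Real.sqrt p / Real.sqrt (normSq (g i))) • g i) ∈ SSet p m c r →
        ∀ i : Fin m,
          |dotp (fun j => g i j - avg g j)
              ((Real.sqrt p / Real.sqrt (normSq (avg g))) • avg g)|
            ≤ (C₂ * c + C₃ * ε) * p := by
  obtain ⟨hr₀0, hr₀1⟩ := hr₀
  have hsr₀ : 0 < Real.sqrt r₀ := Real.sqrt_pos.mpr hr₀0
  refine ⟨1/2, by norm_num, 18 / Real.sqrt r₀, by positivity,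
    18 / Real.sqrt r₀, by positivity, ?_⟩
  intro p m hm r hr c hc ε hε g hnorm hS i
  obtain ⟨hr1, hr2⟩ := hr
  obtain ⟨hc0, hc1⟩ := hc
  obtain ⟨hε0, hε1⟩ := hε
  rcases Nat.eq_zero_or_pos p with hp | hp
  · subst hp
    have h := hnorm i
    simp only [Nat.cast_zero, Real.sqrt_zero, zero_mul, Set.mem_Ioo] at h
    linarith [h.1, h.2]
  have hp0 : (0:ℝ) < p := by exact_mod_cast hp
  have hm0 : (0:ℝ) < m := by positivity
  have hm2 : (2:ℝ) ≤ m := by exact_mod_cast hm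
  have hsqp : 0 < Real.sqrt p := Real.sqrt_pos.mpr hp0
  have hps : Real.sqrt p * Real.sqrt p = (p:ℝ) := Real.mul_self_sqrt hp0.le
  have hnlo : ∀ j, Real.sqrt p * (1 - ε) < Real.sqrt (normSq (g j)) :=
    fun j => (hnorm j).1
  have hnhi : ∀ j, Real.sqrt (normSq (g j)) < Real.sqrt p * (1 + ε) :=
    fun j => (hnorm j).2
  have hnpos : ∀ j, 0 < Real.sqrt (normSq (g j)) :=
    fun j => lt_trans (by nlinarith) (hnlo j)
  have hsdiag : ∀ j, dotp (g j) (g j) = Real.sqrt (normSq (g j)) ^ 2 := by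
    intro j
    rw [← normSq_eq_dotp]
    exact (Real.sq_sqrt (normSq_nonneg' _)).symm
  -- products of norms bounds
  have hprodlo : ∀ j k, (p:ℝ) * (1-ε)^2 <
      Real.sqrt (normSq (g j)) * Real.sqrt (normSq (g k)) := by
    intro j k
    have h1 := hnlo j; have h2 := hnlo k
    have h3 : (0:ℝ) < Real.sqrt p * (1 - ε) := by nlinarith
    nlinarith [hnpos j, hnpos k]
  have hprodhi : ∀ j k, Real.sqrt (normSq (g j)) * Real.sqrt (normSq (g k))
      < (p:ℝ) * (1+ε)^2 := by
    intro j k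
    have h1 := hnhi j; have h2 := hnhi k
    nlinarith [hnpos j, hnpos k]
  -- off-diagonal overlap bounds
  have hoff : ∀ j k, j ≠ k →
      |dotp (g j) (g k) / (Real.sqrt (normSq (g j)) * Real.sqrt (normSq (g k))) - r|
        ≤ c := by
    intro j k hjk
    have h := hS.2 j k hjk
    simp only at h
    rw [dotp_smul_left, dotp_smul_right] at h
    have hnj : Real.sqrt (normSq (g j)) ≠ 0 := (hnpos j).ne'
    have hnk : Real.sqrt (normSq (g k)) ≠ 0 := (hnpos k).ne'
    have key : Real.sqrt p / Real.sqrt (normSq (g j)) *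
        (Real.sqrt p / Real.sqrt (normSq (g k)) * dotp (g j) (g k)) / p
        = dotp (g j) (g k) / (Real.sqrt (normSq (g j)) * Real.sqrt (normSq (g k))) := by
      field_simp
      linear_combination (dotp (g j) (g k)) * hps
    rwa [key] at h
  -- unified deviation bound
  have hub : ∀ j k, |dotp (g j) (g k) - (r * p + (if k = j then (1-r)*p else 0))|
      ≤ 3 * (c + ε) * p := by
    intro j k
    rcases eq_or_ne k j with hjk | hjk
    · subst hjk
      simp only [eq_self_iff_true, if_true]
      rw [hsdiag, abs_le]
      constructor
      · nlinarith [hprodlo k k, mul_nonneg (mul_nonneg hp0.le hε0.le) hε0.le,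
          mul_pos hp0 hc0]
      · nlinarith [hprodhi k k, mul_nonneg (mul_nonneg hp0.le hε0.le)
          (by linarith : (0:ℝ) ≤ 1 - ε), mul_pos hp0 hc0]
    · rw [if_neg hjk]
      have h := hoff j k (Ne.symm hjk)
      rw [abs_le] at h
      have hq := hprodlo j k
      have hq' := hprodhi j k
      have hqpos : 0 < Real.sqrt (normSq (g j)) * Real.sqrt (normSq (g k)) :=
        mul_pos (hnpos j) (hnpos k)
      have hs1 : (r - c) * (Real.sqrt (normSq (g j)) * Real.sqrt (normSq (g k)))
          ≤ dotp (g j) (g k) := by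
        rw [← le_div_iff₀ hqpos]; linarith [h.1]
      have hs2 : dotp (g j) (g k)
          ≤ (r + c) * (Real.sqrt (normSq (g j)) * Real.sqrt (normSq (g k))) := by
        rw [← div_le_iff₀ hqpos]; linarith [h.2]
      have e1 : (r + c) * (Real.sqrt (normSq (g j)) * Real.sqrt (normSq (g k)))
          ≤ (r + c) * ((p:ℝ) * (1+ε)^2) :=
        mul_le_mul_of_nonneg_left hq'.le (by linarith)
      have e2 : (r - c) * ((p:ℝ) * (1-ε)^2)
          ≤ (r - c) * (Real.sqrt (normSq (g j)) * Real.sqrt (normSq (g k))) :=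
        mul_le_mul_of_nonneg_left hq.le (by linarith)
      have au := arith_upper (r := r) hp0 hc0 hε0 (by linarith) (by linarith)
        (by linarith : (0:ℝ) ≤ r)
      have al := arith_lower (r := r) hp0 hc0 hε0 (by linarith) (by linarith)
      rw [abs_le]
      constructor
      · linarith
      · linarith
  -- pointwise lower bound
  have hlb : ∀ j k, (1-ε)^2 * (r - c) * p ≤ dotp (g j) (g k) := by
    intro j k
    rcases eq_or_ne k j with hjk | hjk
    · subst hjk
      rw [hsdiag]
      have h := hprodlo k k
      nlinarith [mul_nonneg (mul_nonneg (sq_nonneg (1-ε)) hp0.le)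
        (by linarith : (0:ℝ) ≤ 1 - r + c)]
    · have h := hoff j k (Ne.symm hjk)
      rw [abs_le] at h
      have hqpos : 0 < Real.sqrt (normSq (g j)) * Real.sqrt (normSq (g k)) :=
        mul_pos (hnpos j) (hnpos k)
      have hs1 : (r - c) * (Real.sqrt (normSq (g j)) * Real.sqrt (normSq (g k)))
          ≤ dotp (g j) (g k) := by
        rw [← le_div_iff₀ hqpos]; linarith [h.1]
      have hq := hprodlo j k
      have e2 : (r - c) * ((p:ℝ) * (1-ε)^2)
          ≤ (r - c) * (Real.sqrt (normSq (g j)) * Real.sqrt (normSq (g k))) :=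
        mul_le_mul_of_nonneg_left hq.le (by linarith)
      nlinarith
  have hrow := row_bound (fun j k => dotp (g j) (g k)) (r * p) ((1-r)*p)
    (3 * (c + ε) * p) hub
  have hT : |(∑ j, ∑ k, dotp (g j) (g k)) - (m:ℝ) * ((m:ℝ) * (r * p) + (1-r)*p)|
      ≤ (m:ℝ) * ((m:ℝ) * (3 * (c + ε) * p)) := by
    calc |(∑ j, ∑ k, dotp (g j) (g k)) - (m:ℝ) * ((m:ℝ) * (r * p) + (1-r)*p)|
        = |∑ j, ((∑ k, dotp (g j) (g k)) - ((m:ℝ) * (r * p) + (1-r)*p))| := by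
          rw [Finset.sum_sub_distrib, Finset.sum_const, Finset.card_univ,
            Fintype.card_fin, nsmul_eq_mul]
      _ ≤ ∑ j, |(∑ k, dotp (g j) (g k)) - ((m:ℝ) * (r * p) + (1-r)*p)| :=
          Finset.abs_sum_le_sum_abs _ _
      _ ≤ ∑ _j : Fin m, (m:ℝ) * (3 * (c + ε) * p) :=
          Finset.sum_le_sum (fun j _ => hrow j)
      _ = (m:ℝ) * ((m:ℝ) * (3 * (c + ε) * p)) := by
          simp [Finset.sum_const, Finset.card_univ, nsmul_eq_mul]
  have hgb : dotp (g i) (avg g) = (∑ k, dotp (g i) (g k)) / m := dotp_avg_right _ _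
  have hbb : dotp (avg g) (avg g) = (∑ j, ∑ k, dotp (g j) (g k)) / ((m:ℝ) * m) := by
    rw [dotp_avg_right]
    have h : ∀ j, dotp (avg g) (g j) = (∑ k, dotp (g j) (g k)) / m := by
      intro j
      rw [dotp_comm, dotp_avg_right]
    simp_rw [h]
    rw [← Finset.sum_div, div_div]
  have hDbound : |dotp (g i) (avg g) - dotp (avg g) (avg g)| ≤ 2 * (3 * (c + ε) * p) := by
    have hid : (dotp (g i) (avg g) - dotp (avg g) (avg g)) * ((m:ℝ) * m)
        = (m:ℝ) * ((∑ k, dotp (g i) (g k)) - ((m:ℝ) * (r * p) + (1-r)*p))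
          - ((∑ j, ∑ k, dotp (g j) (g k)) - (m:ℝ) * ((m:ℝ) * (r * p) + (1-r)*p)) := by
      rw [hgb, hbb]
      field_simp
      ring
    have h1 := abs_le.mp (hrow i)
    have h2 := abs_le.mp hT
    have h1a := mul_le_mul_of_nonneg_left h1.1 hm0.le
    have h1b := mul_le_mul_of_nonneg_left h1.2 hm0.le
    rw [abs_le]
    constructor
    · nlinarith [mul_pos hm0 hm0]
    · nlinarith [mul_pos hm0 hm0]
  have hQlb : r₀ / 8 * p ≤ dotp (avg g) (avg g) := by
    have hkey : r₀ / 8 ≤ (1-ε)^2 * (r - c) := by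
      have h14 : (1:ℝ)/4 ≤ (1-ε)^2 := by nlinarith
      have hrc : r₀/2 ≤ r - c := by linarith
      have := mul_le_mul h14 hrc (by linarith) (sq_nonneg (1-ε))
      linarith
    have hTlb : (m:ℝ) * m * ((1-ε)^2 * (r - c) * p) ≤ ∑ j, ∑ k, dotp (g j) (g k) := by
      calc (m:ℝ) * m * ((1-ε)^2 * (r - c) * p)
          = ∑ _j : Fin m, ∑ _k : Fin m, (1-ε)^2 * (r - c) * p := by
            simp [Finset.sum_const, Finset.card_univ, nsmul_eq_mul]; ring
        _ ≤ ∑ j, ∑ k, dotp (g j) (g k) :=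
            Finset.sum_le_sum fun j _ => Finset.sum_le_sum fun k _ => hlb j k
    rw [hbb, le_div_iff₀ (by positivity : (0:ℝ) < (m:ℝ) * m)]
    have := mul_le_mul_of_nonneg_left hkey
      (by positivity : (0:ℝ) ≤ (m:ℝ) * m * p)
    nlinarith
  -- final assembly
  have hQpos : 0 < dotp (avg g) (avg g) := lt_of_lt_of_le (by positivity) hQlb
  rw [dotp_smul_right, dotp_sub_left, abs_mul, normSq_eq_dotp]
  have habs : |Real.sqrt p / Real.sqrt (dotp (avg g) (avg g))|
      = Real.sqrt p / Real.sqrt (dotp (avg g) (avg g)) :=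
    abs_of_nonneg (by positivity)
  rw [habs]
  have hfrac : Real.sqrt p / Real.sqrt (dotp (avg g) (avg g)) ≤ 3 / Real.sqrt r₀ := by
    have h2 : Real.sqrt r₀ / 3 ≤ Real.sqrt (r₀ / 8) := by
      have : Real.sqrt r₀ / 3 = Real.sqrt (r₀ / 9) := by
        rw [show r₀ / 9 = r₀ * (1/9) by ring, Real.sqrt_mul hr₀0.le,
          show Real.sqrt (1/9 : ℝ) = 1/3 by
            rw [show (1/9 : ℝ) = (1/3)^2 by norm_num, Real.sqrt_sq (by norm_num)]]
        ring
      rw [this]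
      exact Real.sqrt_le_sqrt (by linarith)
    have h1 : Real.sqrt r₀ / 3 * Real.sqrt p ≤ Real.sqrt (dotp (avg g) (avg g)) := by
      calc Real.sqrt r₀ / 3 * Real.sqrt p ≤ Real.sqrt (r₀ / 8) * Real.sqrt p :=
            mul_le_mul_of_nonneg_right h2 hsqp.le
        _ = Real.sqrt (r₀ / 8 * p) := (Real.sqrt_mul (by positivity) _).symm
        _ ≤ Real.sqrt (dotp (avg g) (avg g)) := Real.sqrt_le_sqrt hQlb
    have h3 : 0 < Real.sqrt r₀ / 3 * Real.sqrt p := by positivity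
    rw [div_le_div_iff₀ (lt_of_lt_of_le h3 h1) hsr₀]
    nlinarith
  calc Real.sqrt p / Real.sqrt (dotp (avg g) (avg g))
        * |dotp (g i) (avg g) - dotp (avg g) (avg g)|
      ≤ (3 / Real.sqrt r₀) * (2 * (3 * (c + ε) * p)) :=
        mul_le_mul hfrac hDbound (abs_nonneg _) (by positivity)
    _ = (18 / Real.sqrt r₀ * c + 18 / Real.sqrt r₀ * ε) * p := by
        ring


end TAPReg
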